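/- arXiv:2305.11514 — 2 statements merged into one kernel-verified Lean document; each statement's English description precedes it below -/
import Mathlib

section
/- If u is a polynomial curve Y_τ = y₀(1-τ) + y₁τ and H : ℝ^d → ℝ is continuously differentiable, then H(y₁) - H(y₀) = ∫₀¹ ∇H(Y_τ)ᵀ (y₁ - y₀) dτ. Consequently, for the AVF method y₁ = y₀ + h S ∫₀¹ ∇H((1-τ)y₀ + τy₁) dτ with S skew-symmetric constant, H(y₁) = H(y₀). -/
/-! Along the segment `τ ↦ (1 - τ) • y₀ + τ • y₁` the fundamental theorem of calculus gives
`H y₁ - H y₀ = (∫ ∇H) ⬝ᵥ (y₁ - y₀)`. For the AVF step `y₁ - y₀ = h • S *ᵥ ∫ ∇H`, so this is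
`h • ḡ ⬝ᵥ S *ᵥ ḡ` for the averaged gradient `ḡ`, which vanishes because `S` is skew-symmetric. -/

open Matrix

theorem Matrix.dotProduct_mulVec_self_eq_zero_of_transpose_eq_neg {n R : Type*} [Fintype n]
    [CommRing R] [IsAddTorsionFree R] {S : Matrix n n R} (hS : Sᵀ = -S) (v : n → R) :
    v ⬝ᵥ (S *ᵥ v) = 0 := by
  refine self_eq_neg.mp ?_
  calc v ⬝ᵥ (S *ᵥ v) = (Sᵀ *ᵥ v) ⬝ᵥ v := by rw [dotProduct_mulVec, mulVec_transpose]
    _ = -(v ⬝ᵥ (S *ᵥ v)) := by rw [hS, neg_mulVec, neg_dotProduct, dotProduct_comm]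

theorem Module.Dual.apply_eq_dotProduct {n R : Type*} [Fintype n] [DecidableEq n] [CommSemiring R]
    (f : Module.Dual R (n → R)) (v : n → R) : f v = (fun i => f (Pi.single i 1)) ⬝ᵥ v := by
  conv_lhs => rw [← (dotProductEquiv R n).apply_symm_apply f]
  rfl

theorem intervalIntegral.integral_dotProduct_const {n : Type*} [Fintype n] {f : ℝ → n → ℝ}
    {a b : ℝ} (hf : IntervalIntegrable f MeasureTheory.volume a b) (w : n → ℝ) :
    ∫ x in a..b, f x ⬝ᵥ w = (∫ x in a..b, f x) ⬝ᵥ w := by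
  simpa [dotProduct_comm w] using
    (LinearMap.toContinuousLinearMap (dotProductBilin ℝ ℝ w)).intervalIntegral_comp_comm hf

theorem ContDiff.sub_eq_integral_fderiv_lineMap {E F : Type*} [NormedAddCommGroup E]
    [NormedSpace ℝ E] [NormedAddCommGroup F] [NormedSpace ℝ F] [CompleteSpace F] {H : E → F}
    (hH : ContDiff ℝ 1 H) (x y : E) :
    H y - H x = ∫ τ in (0:ℝ)..1, fderiv ℝ H (AffineMap.lineMap x y τ) (y - x) := by
  have hderiv (τ : ℝ) : HasDerivAt (fun t => H (AffineMap.lineMap x y t))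
      (fderiv ℝ H (AffineMap.lineMap x y τ) (y - x)) τ :=
    (hH.differentiable one_ne_zero _).hasFDerivAt.comp_hasDerivAt τ AffineMap.hasDerivAt_lineMap
  have hcont : Continuous fun τ : ℝ => fderiv ℝ H (AffineMap.lineMap x y τ) (y - x) :=
    ((hH.continuous_fderiv one_ne_zero).comp AffineMap.lineMap_continuous).clm_apply
      continuous_const
  rw [intervalIntegral.integral_eq_sub_of_hasDerivAt (fun τ _ => hderiv τ)
    (hcont.intervalIntegrable 0 1)]
  simp

theorem avf_energy_preserving
    (d : ℕ) (S : Matrix (Fin d) (Fin d) ℝ) (hS : Sᵀ = -S)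
    (H : (Fin d → ℝ) → ℝ) (hH : ContDiff ℝ 1 H)
    (gradH : (Fin d → ℝ) → (Fin d → ℝ))
    (hgrad : ∀ x, gradH x = fun i => fderiv ℝ H x (Pi.single i 1))
    (h : ℝ) (y₀ y₁ : Fin d → ℝ)
    (hAVF : y₁ = y₀ + h • (S *ᵥ ∫ τ in (0:ℝ)..1, gradH ((1 - τ) • y₀ + τ • y₁))) :
    (H y₁ - H y₀ = ∫ τ in (0:ℝ)..1, gradH ((1 - τ) • y₀ + τ • y₁) ⬝ᵥ (y₁ - y₀)) ∧
    H y₁ = H y₀ := by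
  have hfderiv (x v : Fin d → ℝ) : fderiv ℝ H x v = gradH x ⬝ᵥ v := by
    rw [hgrad]
    exact Module.Dual.apply_eq_dotProduct (fderiv ℝ H x).toLinearMap v
  have hgrad_cont : Continuous gradH := by
    rw [funext hgrad]
    exact continuous_pi fun i => (hH.continuous_fderiv one_ne_zero).clm_apply continuous_const
  have hFTC : H y₁ - H y₀ = ∫ τ in (0:ℝ)..1, gradH ((1 - τ) • y₀ + τ • y₁) ⬝ᵥ (y₁ - y₀) := by
    simpa only [hfderiv, AffineMap.lineMap_apply_module] using
      hH.sub_eq_integral_fderiv_lineMap y₀ y₁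
  refine ⟨hFTC, sub_eq_zero.mp ?_⟩
  have hint : IntervalIntegrable (fun τ : ℝ => gradH ((1 - τ) • y₀ + τ • y₁))
      MeasureTheory.volume 0 1 := by
    apply Continuous.intervalIntegrable
    fun_prop
  rw [hFTC, intervalIntegral.integral_dotProduct_const hint, sub_eq_of_eq_add' hAVF,
    dotProduct_smul, dotProduct_mulVec_self_eq_zero_of_transpose_eq_neg hS, smul_zero]
end

section
/- The modified AVF scheme y₁ = y₀ + S((y₁+y₀)/2) ∫₀¹ ∇H((1-τ)y₀ + τy₁) dτ, where S(z) is skew-symmetric for every z, preserves the energy: H(y₁) = H(y₀). -/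
/-!
By the chain rule along the segment from `y₀` to `y₁`, `H y₁ - H y₀ = (y₁ - y₀) ⬝ᵥ v` where `v` is
the averaged gradient. The scheme says `y₁ - y₀ = S v` with `S` skew-symmetric, so the difference is
`(S v) ⬝ᵥ v = 0`.
-/

open Matrix

theorem LinearMap.apply_eq_dotProduct_single {ι R : Type*} [Fintype ι] [DecidableEq ι]
    [CommSemiring R] (f : (ι → R) →ₗ[R] R) (v : ι → R) :
    f v = v ⬝ᵥ fun i => f (Pi.single i 1) := by
  conv_lhs => rw [pi_eq_sum_univ' v, map_sum]
  simp [dotProduct]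

theorem Matrix.mulVec_dotProduct_self_eq_zero {n R : Type*} [Fintype n] [CommRing R]
    [NoZeroDivisors R] [CharZero R] {A : Matrix n n R} (hA : Aᵀ = -A) (v : n → R) :
    (A *ᵥ v) ⬝ᵥ v = 0 := by
  refine CharZero.eq_neg_self_iff.mp ?_
  calc (A *ᵥ v) ⬝ᵥ v = (Aᵀ *ᵥ v) ⬝ᵥ v := by
        rw [dotProduct_comm, dotProduct_mulVec, mulVec_transpose]
    _ = -((A *ᵥ v) ⬝ᵥ v) := by rw [hA, neg_mulVec, neg_dotProduct]

theorem intervalIntegral.integral_dotProduct {ι 𝕜 : Type*} [Fintype ι] [RCLike 𝕜]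
    {g : ℝ → ι → 𝕜} {a b : ℝ} (hg : IntervalIntegrable g MeasureTheory.volume a b) (v : ι → 𝕜) :
    ∫ τ in a..b, v ⬝ᵥ g τ = v ⬝ᵥ ∫ τ in a..b, g τ :=
  (LinearMap.toContinuousLinearMap (dotProductBilin 𝕜 𝕜 v)).intervalIntegral_comp_comm hg

theorem ContDiff.sub_eq_integral_fderiv_segment {E F : Type*} [NormedAddCommGroup E]
    [NormedSpace ℝ E] [NormedAddCommGroup F] [NormedSpace ℝ F] [CompleteSpace F] {f : E → F}
    (hf : ContDiff ℝ 1 f) (x y : E) :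
    f y - f x = ∫ τ in (0:ℝ)..1, fderiv ℝ f ((1 - τ) • x + τ • y) (y - x) := by
  have hpath : ∀ τ : ℝ, HasDerivAt (fun τ : ℝ => (1 - τ) • x + τ • y) (y - x) τ := fun τ => by
    convert AffineMap.hasDerivAt_lineMap (a := x) (b := y) (x := τ) using 1
    exact funext fun τ => (AffineMap.lineMap_apply_module x y τ).symm
  have hcont : Continuous fun τ : ℝ => fderiv ℝ f ((1 - τ) • x + τ • y) (y - x) := by
    have := hf.continuous_fderiv one_ne_zero
    fun_prop
  rw [intervalIntegral.integral_eq_sub_of_hasDerivAt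
    (fun τ _ => ((hf.differentiable one_ne_zero _).hasFDerivAt).comp_hasDerivAt τ (hpath τ))
    (hcont.intervalIntegrable 0 1)]
  simp

/-- Mathlib's `gradient` lives on inner product spaces; on `ι → ℝ` we use the vector of partial
derivatives. -/
noncomputable def coordGradient {ι : Type*} [Fintype ι] [DecidableEq ι] (H : (ι → ℝ) → ℝ)
    (x : ι → ℝ) : ι → ℝ :=
  fun i => fderiv ℝ H x (Pi.single i 1)

theorem ContDiff.sub_eq_dotProduct_integral_coordGradient {ι : Type*} [Fintype ι] [DecidableEq ι]
    {H : (ι → ℝ) → ℝ} (hH : ContDiff ℝ 1 H) (x y : ι → ℝ) :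
    H y - H x = (y - x) ⬝ᵥ ∫ τ in (0:ℝ)..1, coordGradient H ((1 - τ) • x + τ • y) := by
  have hcont : Continuous fun τ : ℝ => coordGradient H ((1 - τ) • x + τ • y) := by
    have := hH.continuous_fderiv one_ne_zero
    unfold coordGradient
    fun_prop
  rw [← intervalIntegral.integral_dotProduct (hcont.intervalIntegrable 0 1),
    hH.sub_eq_integral_fderiv_segment]
  congr 1 with τ
  exact (fderiv ℝ H _).toLinearMap.apply_eq_dotProduct_single (y - x)

theorem modified_avf_energy_preserving
    (d : ℕ) (S : (Fin d → ℝ) → Matrix (Fin d) (Fin d) ℝ)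
    (hS : ∀ z, (S z)ᵀ = -(S z))
    (H : (Fin d → ℝ) → ℝ) (hH : ContDiff ℝ 1 H)
    (gradH : (Fin d → ℝ) → (Fin d → ℝ))
    (hgrad : ∀ x, gradH x = fun i => fderiv ℝ H x (Pi.single i 1))
    (y₀ y₁ : Fin d → ℝ)
    (hscheme : y₁ = y₀ + (S ((1/2 : ℝ) • (y₁ + y₀)) *ᵥ
      ∫ τ in (0:ℝ)..1, gradH ((1 - τ) • y₀ + τ • y₁))) :
    H y₁ = H y₀ := by
  obtain rfl : gradH = coordGradient H := funext hgrad
  rw [← sub_eq_zero, hH.sub_eq_dotProduct_integral_coordGradient, sub_eq_iff_eq_add'.mpr hscheme]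
  exact mulVec_dotProduct_self_eq_zero (hS _) _
end
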